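/- arXiv:1512.05163 — 2 statements merged into one kernel-verified Lean document; each statement's English description precedes it below -/
import Mathlib

section
/- For every Ψ = (φ,ψ) ∈ W and every δ > 0, Re b(Ψ, TΨ) ≥ (γ − 1/δ)‖φ‖²_{L²} + (1 − δ)‖ψ‖²_{L²}. In particular, for any δ ∈ (1/γ, 1), b is T-coercive on W × W: Re b(Ψ, TΨ) ≥ min{γ − 1/δ, 1 − δ}·‖Ψ‖²_W. -/
/-! With `TΨ = (φ, 2φ − ψ)` the form becomes `Re b(Ψ, TΨ) = Re (nφ, φ) − 2 Re (φ, ψ) + ‖ψ‖²`.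
The cross term is absorbed by Cauchy–Schwarz and Young's inequality
`2 ‖φ‖ ‖ψ‖ ≤ ‖φ‖² / δ + δ ‖ψ‖²`, and `Re (nφ, φ) ≥ γ ‖φ‖²`. -/

noncomputable section

/-- The sesquilinear form `b(U,Ψ) = (n w, φ) − (v, ψ)` on `W = L²(Ω) × L²(Ω)`,
where `U = (w,v)`, `Ψ = (φ,ψ)`, the multiplication by the index of refraction `n` is
the bounded operator `nop` on `L²(Ω)`, and `(f,g) = ∫ f ḡ` is the `L²` inner product
(linear in `f`, conjugate-linear in `g`). -/
def bFormW {L2 : Type*} [NormedAddCommGroup L2] [InnerProductSpace ℂ L2]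
    (nop : L2 →L[ℂ] L2) (U Ψ : L2 × L2) : ℂ :=
  (inner ℂ Ψ.1 (nop U.1) : ℂ) - (inner ℂ Ψ.2 U.2 : ℂ)

open RCLike

theorem two_mul_le_div_add_mul {a b δ : ℝ} (hδ : 0 < δ) : 2 * (a * b) ≤ a ^ 2 / δ + δ * b ^ 2 := by
  have hsq : 0 ≤ (a - δ * b) ^ 2 / δ := div_nonneg (sq_nonneg _) hδ.le
  have hexp : (a - δ * b) ^ 2 / δ = a ^ 2 / δ + δ * b ^ 2 - 2 * (a * b) := by
    field_simp
    ring
  linarith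

theorem two_mul_re_inner_le_div_add_mul {𝕜 E : Type*} [RCLike 𝕜] [NormedAddCommGroup E]
    [InnerProductSpace 𝕜 E] (x y : E) {δ : ℝ} (hδ : 0 < δ) :
    2 * re (inner 𝕜 x y) ≤ ‖x‖ ^ 2 / δ + δ * ‖y‖ ^ 2 := by
  have := re_inner_le_norm (𝕜 := 𝕜) x y
  linarith [two_mul_le_div_add_mul (a := ‖x‖) (b := ‖y‖) hδ]

theorem min_mul_add_le_mul_add_mul {a b x y : ℝ} (hx : 0 ≤ x) (hy : 0 ≤ y) :
    min a b * (x + y) ≤ a * x + b * y := by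
  have hxa : min a b * x ≤ a * x := mul_le_mul_of_nonneg_right (min_le_left a b) hx
  have hyb : min a b * y ≤ b * y := mul_le_mul_of_nonneg_right (min_le_right a b) hy
  linarith

theorem sub_one_div_pos_of_one_div_lt {γ δ : ℝ} (hγ : 0 < γ) (hδ : 1 / γ < δ) :
    0 < γ - 1 / δ := by
  have hδpos : 0 < δ := (one_div_pos.mpr hγ).trans hδ
  have : 1 / δ < γ := by
    rwa [div_lt_iff₀ hδpos, mul_comm, ← div_lt_iff₀ hγ]
  linarith

section

variable {L2 : Type*} [NormedAddCommGroup L2] [InnerProductSpace ℂ L2]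

theorem re_bFormW_apply_T (nop : L2 →L[ℂ] L2) (φ ψ : L2) :
    (bFormW nop (φ, ψ) (φ, (2 : ℂ) • φ - ψ)).re
      = (inner ℂ φ (nop φ) : ℂ).re - 2 * (inner ℂ φ ψ : ℂ).re + ‖ψ‖ ^ 2 := by
  have hψ : (inner ℂ ψ ψ : ℂ).re = ‖ψ‖ ^ 2 := inner_self_eq_norm_sq (𝕜 := ℂ) ψ
  simp only [bFormW, inner_sub_left, inner_smul_left, Complex.sub_re, Complex.mul_re,
    Complex.conj_re, Complex.conj_im, Complex.re_ofNat, Complex.im_ofNat, hψ]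
  ring

theorem le_re_bFormW_apply_T (nop : L2 →L[ℂ] L2) {γ : ℝ}
    (hn : ∀ f : L2, γ * ‖f‖ ^ 2 ≤ (inner ℂ f (nop f) : ℂ).re) (φ ψ : L2) {δ : ℝ} (hδ : 0 < δ) :
    (γ - 1 / δ) * ‖φ‖ ^ 2 + (1 - δ) * ‖ψ‖ ^ 2
      ≤ (bFormW nop (φ, ψ) (φ, (2 : ℂ) • φ - ψ)).re := by
  rw [re_bFormW_apply_T]
  have hyoung : 2 * (inner ℂ φ ψ : ℂ).re ≤ 1 / δ * ‖φ‖ ^ 2 + δ * ‖ψ‖ ^ 2 := by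
    rw [one_div_mul_eq_div]
    exact two_mul_re_inner_le_div_add_mul (𝕜 := ℂ) φ ψ hδ
  linarith [hn φ]

end

theorem bForm_tcoercive_general
    {L2 : Type*} [NormedAddCommGroup L2] [InnerProductSpace ℂ L2]
    (nop : L2 →L[ℂ] L2) (γ : ℝ) (hγ : 1 < γ)
    (hn : ∀ f : L2, γ * ‖f‖ ^ 2 ≤ (inner ℂ f (nop f) : ℂ).re) :
    ∀ φ ψ : L2,
      (∀ δ : ℝ, 0 < δ →
        (γ - 1 / δ) * ‖φ‖ ^ 2 + (1 - δ) * ‖ψ‖ ^ 2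
          ≤ (bFormW nop (φ, ψ) (φ, (2 : ℂ) • φ - ψ)).re) ∧
      (∀ δ : ℝ, 1 / γ < δ → δ < 1 →
        0 < min (γ - 1 / δ) (1 - δ) ∧
        min (γ - 1 / δ) (1 - δ) * (‖φ‖ ^ 2 + ‖ψ‖ ^ 2)
          ≤ (bFormW nop (φ, ψ) (φ, (2 : ℂ) • φ - ψ)).re) := by
  intro φ ψ
  refine ⟨fun δ hδ => le_re_bFormW_apply_T nop hn φ ψ hδ, fun δ hγδ hδ1 => ⟨?_, ?_⟩⟩
  · exact lt_min (sub_one_div_pos_of_one_div_lt (by linarith) hγδ) (by linarith)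
  · have hδ : 0 < δ := (one_div_pos.mpr (by linarith)).trans hγδ
    exact (min_mul_add_le_mul_add_mul (sq_nonneg _) (sq_nonneg _)).trans
      (le_re_bFormW_apply_T nop hn φ ψ hδ)

/-- **T-coercivity of the form `b` on `W × W`** with `T(φ,ψ) = (φ, 2φ − ψ)`:
for every `Ψ = (φ,ψ) ∈ W` and every `δ > 0`,
`Re b(Ψ, TΨ) ≥ (γ − 1/δ) ‖φ‖² + (1 − δ) ‖ψ‖²`; in particular for `δ ∈ (1/γ, 1)`
one has `Re b(Ψ, TΨ) ≥ min (γ − 1/δ) (1 − δ) · ‖Ψ‖²_W` with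
`min (γ − 1/δ) (1 − δ) > 0`, where `‖Ψ‖²_W = ‖φ‖² + ‖ψ‖²`. -/
theorem bForm_tcoercive
    {L2 : Type*} [NormedAddCommGroup L2] [InnerProductSpace ℂ L2] [CompleteSpace L2]
    (nop : L2 →L[ℂ] L2) (γ : ℝ) (hγ : 1 < γ)
    (hsym : ∀ f g : L2, (inner ℂ (nop f) g : ℂ) = (inner ℂ f (nop g) : ℂ))
    (hn : ∀ f : L2, γ * ‖f‖ ^ 2 ≤ (inner ℂ f (nop f) : ℂ).re) :
    ∀ φ ψ : L2,
      (∀ δ : ℝ, 0 < δ →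
        (γ - 1 / δ) * ‖φ‖ ^ 2 + (1 - δ) * ‖ψ‖ ^ 2
          ≤ (bFormW nop (φ, ψ) (φ, (2 : ℂ) • φ - ψ)).re) ∧
      (∀ δ : ℝ, 1 / γ < δ → δ < 1 →
        0 < min (γ - 1 / δ) (1 - δ) ∧
        min (γ - 1 / δ) (1 - δ) * (‖φ‖ ^ 2 + ‖ψ‖ ^ 2)
          ≤ (bFormW nop (φ, ψ) (φ, (2 : ℂ) • φ - ψ)).re) :=
  bForm_tcoercive_general nop γ hγ hn
end
end

section
/- Let V be a complex Hilbert space, a : V × V → ℂ a bounded sesquilinear form, and T : V → V a bounded linear operator with ‖TΨ‖ ≤ M‖Ψ‖ for all Ψ ∈ V. If Re a(Ψ, TΨ) ≥ α‖Ψ‖² for all Ψ ∈ V with some α > 0, then inf_{0≠Φ∈V} sup_{0≠Ψ∈V} |a(Φ,Ψ)|/(‖Φ‖‖Ψ‖) ≥ α/M; if moreover Re a(TΨ, Ψ) ≥ α‖Ψ‖² for all Ψ ∈ V, then also inf_{0≠Φ∈V} sup_{0≠Ψ∈V} |a(Ψ,Φ)|/(‖Ψ‖‖Φ‖) ≥ α/M.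 -/
open scoped ComplexConjugate

private lemma tcoer_key {V : Type*} [NormedAddCommGroup V] [InnerProductSpace ℂ V]
    (b : V → V → ℂ) (Ca : ℝ) (hb_bdd : ∀ x y : V, ‖b x y‖ ≤ Ca * ‖x‖ * ‖y‖)
    (T : V →L[ℂ] V) (M : ℝ) (hM : 0 < M) (hT : ∀ Ψ : V, ‖T Ψ‖ ≤ M * ‖Ψ‖)
    (α : ℝ) (hα : 0 < α)
    (hcoer : ∀ Ψ : V, α * ‖Ψ‖ ^ 2 ≤ (b Ψ (T Ψ)).re)
    (hzero : ∀ x : V, b x 0 = 0)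
    (Φ : V) (hΦ : Φ ≠ 0) :
    α / M ≤ ⨆ Ψ : {Ψ : V // Ψ ≠ 0}, ‖b Φ (Ψ : V)‖ / (‖Φ‖ * ‖(Ψ : V)‖) := by
  have hΦn : 0 < ‖Φ‖ := norm_pos_iff.mpr hΦ
  have hTΦ : T Φ ≠ 0 := by
    intro h
    have := hcoer Φ
    rw [h, hzero] at this
    simp at this
    nlinarith [mul_pos hα (mul_pos hΦn hΦn)]
  have hbdd : BddAbove (Set.range fun Ψ : {Ψ : V // Ψ ≠ 0} =>
      ‖b Φ (Ψ : V)‖ / (‖Φ‖ * ‖(Ψ : V)‖)) := by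
    refine ⟨Ca, ?_⟩
    rintro x ⟨Ψ, rfl⟩
    have hΨn : 0 < ‖(Ψ : V)‖ := norm_pos_iff.mpr Ψ.2
    rw [div_le_iff₀ (by positivity)]
    calc ‖b Φ (Ψ : V)‖ ≤ Ca * ‖Φ‖ * ‖(Ψ : V)‖ := hb_bdd _ _
      _ = Ca * (‖Φ‖ * ‖(Ψ : V)‖) := by ring
  refine le_ciSup_of_le hbdd ⟨T Φ, hTΦ⟩ ?_
  have hTn : 0 < ‖T Φ‖ := norm_pos_iff.mpr hTΦ
  have h1 : α * ‖Φ‖ ^ 2 ≤ ‖b Φ (T Φ)‖ :=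
    (hcoer Φ).trans ((Complex.abs_re_le_norm _).trans' (le_abs_self _))
  have h2 : ‖Φ‖ * ‖T Φ‖ ≤ M * ‖Φ‖ ^ 2 := by
    have := hT Φ
    nlinarith
  have heq : α / M = α * ‖Φ‖ ^ 2 / (M * ‖Φ‖ ^ 2) := by
    rw [mul_div_mul_right _ _ (by positivity)]
  rw [heq]
  exact div_le_div₀ (norm_nonneg _) h1 (by positivity) h2

/-- **T-coercivity implies the inf-sup conditions** (abstract principle).
`V` is a complex Hilbert space, `a` a bounded sesquilinear form on `V`
(linear in the first argument, conjugate-linear in the second), and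
`T : V → V` a bounded linear operator with `‖T Ψ‖ ≤ M * ‖Ψ‖` for all `Ψ`.
If `Re a(Ψ, TΨ) ≥ α * ‖Ψ‖²` for all `Ψ` with `α > 0`, then
`inf_{0≠Φ} sup_{0≠Ψ} |a(Φ,Ψ)| / (‖Φ‖ * ‖Ψ‖) ≥ α / M`; if moreover
`Re a(TΨ, Ψ) ≥ α * ‖Ψ‖²` for all `Ψ`, then also
`inf_{0≠Φ} sup_{0≠Ψ} |a(Ψ,Φ)| / (‖Ψ‖ * ‖Φ‖) ≥ α / M`. -/
theorem tcoercivity_implies_infsup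
    {V : Type*} [NormedAddCommGroup V] [InnerProductSpace ℂ V] [CompleteSpace V]
    (a : V → V → ℂ)
    (ha_add_left : ∀ x y z : V, a (x + y) z = a x z + a y z)
    (ha_add_right : ∀ x y z : V, a x (y + z) = a x y + a x z)
    (ha_smul_left : ∀ (c : ℂ) (x y : V), a (c • x) y = c * a x y)
    (ha_smul_right : ∀ (c : ℂ) (x y : V), a x (c • y) = conj c * a x y)
    (Ca : ℝ) (ha_bdd : ∀ x y : V, ‖a x y‖ ≤ Ca * ‖x‖ * ‖y‖)
    (T : V →L[ℂ] V) (M : ℝ) (hM : 0 < M) (hT : ∀ Ψ : V, ‖T Ψ‖ ≤ M * ‖Ψ‖)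
    (α : ℝ) (hα : 0 < α)
    (hcoer : ∀ Ψ : V, α * ‖Ψ‖ ^ 2 ≤ (a Ψ (T Ψ)).re) :
    (∀ Φ : V, Φ ≠ 0 →
        α / M ≤ ⨆ Ψ : {Ψ : V // Ψ ≠ 0}, ‖a Φ (Ψ : V)‖ / (‖Φ‖ * ‖(Ψ : V)‖)) ∧
    ((∀ Ψ : V, α * ‖Ψ‖ ^ 2 ≤ (a (T Ψ) Ψ).re) →
      ∀ Φ : V, Φ ≠ 0 →
        α / M ≤ ⨆ Ψ : {Ψ : V // Ψ ≠ 0}, ‖a (Ψ : V) Φ‖ / (‖(Ψ : V)‖ * ‖Φ‖)) := by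
  have hz_right : ∀ x : V, a x 0 = 0 := by
    intro x
    have := ha_add_right x 0 0
    simpa using this.symm
  have hz_left : ∀ x : V, a 0 x = 0 := by
    intro x
    have := ha_add_left 0 0 x
    simpa using this.symm
  constructor
  · exact fun Φ hΦ => tcoer_key a Ca ha_bdd T M hM hT α hα hcoer hz_right Φ hΦ
  · intro hcoer2 Φ hΦ
    have h := tcoer_key (fun x y => a y x) Ca
      (fun x y => by simpa [mul_right_comm] using ha_bdd y x)
      T M hM hT α hα (fun Ψ => hcoer2 Ψ) hz_left Φ hΦ
    simpa [mul_comm] using h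
end
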